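/- Assume char K ≠ 3, ρ_g ρ_z σ_g = 1 and 1 − ρ_g + ρ_g² = 0 (so in particular ρ_z σ_g = ρ_g⁻¹ ≠ 1). In V ⊗ V ⊗ W set w″ = v₂⊗v₀⊗w − ρ_g² ρ_z σ_g v₀⊗v₁⊗w + ρ_g(1 − ρ_z σ_g) v₁⊗v₂⊗w, and in V ⊗ (V ⊗ V ⊗ W) set w‴ = v₂⊗w″ + ρ_g² ρ_z v₁⊗(g·w″). Then w‴ ≠ 0, g·w‴ = σ_g w‴ and z·w‴ = ρ_z³ σ_z w‴. -/

import Mathlib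

/-!
The element `g` acts on `V` as `ρ_g` times the transposition of `v₁` and `v₂`, so `g²` acts on
`V ⊗ V ⊗ W` by the scalar `s = ρ_g⁴ σ_g²`. Hence for every `x`, `g` sends
`v₂ ⊗ x + c • v₁ ⊗ (g • x)` to `ρ_g • v₁ ⊗ (g • x) + c ρ_g s • v₂ ⊗ x`, which is `σ_g` times the
original vector as soon as `ρ_g = σ_g c` and `c ρ_g s = σ_g`; for `c = ρ_g² ρ_z` both follow from
`ρ_g ρ_z σ_g = 1` and `ρ_g³ = -1`. The element `z` acts by a scalar on every factor.
Finally `w‴ ≠ 0` because its `v₂`-coefficient is `w″`, whose `v₂`-coefficient is `v₀ ⊗ w ≠ 0`.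
-/

open TensorProduct

namespace Representation

variable {K G V U : Type*} [CommSemiring K] [Monoid G] [AddCommMonoid V] [Module K V]
  [AddCommMonoid U] [Module K U]

theorem tprod_apply_eq_smul_one {ρ : Representation K G V} {τ : Representation K G U} {g : G}
    {a b : K} (hρ : ρ g = a • 1) (hτ : τ g = b • 1) : ρ.tprod τ g = (a * b) • 1 := by
  rw [tprod_apply, hρ, hτ, map_smul_left, map_smul_right, smul_smul, TensorProduct.map_one]

theorem tprod_apply_tmul_add_smul_tmul_eq_smul {ρ : Representation K G V}
    {τ : Representation K G U} {g : G} {p q : V} {a c s μ : K}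
    (hp : ρ g p = a • q) (hq : ρ g q = a • p) (hτ : τ (g ^ 2) = s • 1)
    (h₁ : a = μ * c) (h₂ : c * a * s = μ) (x : U) :
    ρ.tprod τ g (p ⊗ₜ x + c • (q ⊗ₜ τ g x)) = μ • (p ⊗ₜ x + c • (q ⊗ₜ τ g x)) := by
  have hx : τ g (τ g x) = s • x := by
    rw [← Module.End.mul_apply, ← map_mul, ← sq, hτ]; rfl
  calc ρ.tprod τ g (p ⊗ₜ x + c • (q ⊗ₜ τ g x))
      = a • (q ⊗ₜ τ g x) + (c * a * s) • (p ⊗ₜ x) := by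
        simp only [tprod_apply, map_add, map_smul, map_tmul, hp, hq, hx, ← smul_tmul', tmul_smul]
        module
    _ = μ • (p ⊗ₜ x + c • (q ⊗ₜ τ g x)) := by
        rw [h₂, h₁, smul_add, smul_smul, add_comm]

end Representation

theorem Module.Basis.ne_zero_of_equivFinsuppOfBasisLeft_apply_ne_zero {R M N ι : Type*}
    [CommSemiring R] [AddCommMonoid M] [Module R M] [AddCommMonoid N] [Module R N]
    [DecidableEq ι] (b : Module.Basis ι R M) {x : M ⊗[R] N} {i : ι}
    (h : equivFinsuppOfBasisLeft b x i ≠ 0) : x ≠ 0 := by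
  rintro rfl
  simp at h

theorem third_pair_adV_cube_W_general
    {K : Type*} [Field K] {G : Type*} [Group G]
    (g z : G)
    {V : Type*} [AddCommGroup V] [Module K V]
    (ρ : Representation K G V) (v : Module.Basis (Fin 3) K V)
    (ρg ρz : K)
    (hzv : ∀ i, ρ z (v i) = ρz • v i)
    (hgv0 : ρ g (v 0) = ρg • v 0) (hgv1 : ρ g (v 1) = ρg • v 2)
    (hgv2 : ρ g (v 2) = ρg • v 1)
    {W : Type*} [AddCommGroup W] [Module K W]
    (σ : Representation K G W) (w : W) (hw : w ≠ 0)
    (hspan : Submodule.span K ({w} : Set W) = ⊤)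
    (σg σz : K)
    (hgw : σ g w = σg • w) (hzw : σ z w = σz • w)
    (hcond1 : ρg * ρz * σg = 1) (hcond2 : 1 - ρg + ρg ^ 2 = 0) :
    ∀ (w'' : V ⊗[K] (V ⊗[K] W)) (w''' : V ⊗[K] (V ⊗[K] (V ⊗[K] W))),
      w'' = v 2 ⊗ₜ[K] (v 0 ⊗ₜ[K] w) -
          (ρg ^ 2 * ρz * σg) • (v 0 ⊗ₜ[K] (v 1 ⊗ₜ[K] w)) +
          (ρg * (1 - ρz * σg)) • (v 1 ⊗ₜ[K] (v 2 ⊗ₜ[K] w)) →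
      w''' = v 2 ⊗ₜ[K] w'' +
          (ρg ^ 2 * ρz) • (v 1 ⊗ₜ[K] ((ρ.tprod (ρ.tprod σ)) g w'')) →
      w''' ≠ 0 ∧
      (ρ.tprod (ρ.tprod (ρ.tprod σ))) g w''' = σg • w''' ∧
      (ρ.tprod (ρ.tprod (ρ.tprod σ))) z w''' = (ρz ^ 3 * σz) • w''' := by
  intro w'' w''' hw'' hw'''
  have hg2V : ρ (g ^ 2) = ρg ^ 2 • 1 := v.ext fun i => by
    fin_cases i <;> simp [sq, hgv0, hgv1, hgv2, smul_smul]
  have hgW : σ g = σg • 1 := LinearMap.ext_on hspan (by simpa using hgw)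
  have hzV : ρ z = ρz • 1 := v.ext fun i => by simpa using hzv i
  have hzW : σ z = σz • 1 := LinearMap.ext_on hspan (by simpa using hzw)
  have hρg3 : ρg ^ 3 = -1 := by linear_combination (1 + ρg) * hcond2
  refine ⟨?_, ?_, ?_⟩
  · have hw0 : v 0 ⊗ₜ[K] w ≠ 0 := v.ne_zero_of_equivFinsuppOfBasisLeft_apply_ne_zero (i := 0)
      (by simpa [equivFinsuppOfBasisLeft_apply_tmul_apply] using hw)
    have hw''0 : w'' ≠ 0 := v.ne_zero_of_equivFinsuppOfBasisLeft_apply_ne_zero (i := 2)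
      (by simpa [hw'', equivFinsuppOfBasisLeft_apply_tmul_apply, Finsupp.single_apply] using hw0)
    exact v.ne_zero_of_equivFinsuppOfBasisLeft_apply_ne_zero (i := 2)
      (by simpa [hw''', equivFinsuppOfBasisLeft_apply_tmul_apply, Finsupp.single_apply] using hw''0)
  · have hg2W : σ (g ^ 2) = σg ^ 2 • 1 := by rw [map_pow, hgW, smul_pow, one_pow]
    rw [hw''']
    refine Representation.tprod_apply_tmul_add_smul_tmul_eq_smul hgv2 hgv1
      (Representation.tprod_apply_eq_smul_one hg2V (Representation.tprod_apply_eq_smul_one hg2V hg2W))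
      ?_ ?_ w''
    · linear_combination -ρg * hcond1
    · linear_combination (ρg ^ 6 * σg) * hcond1 + (ρg ^ 3 - 1) * σg * hρg3
  · rw [Representation.tprod_apply_eq_smul_one hzV (Representation.tprod_apply_eq_smul_one hzV
      (Representation.tprod_apply_eq_smul_one hzV hzW))]
    simp only [LinearMap.smul_apply, Module.End.one_apply]
    congr 1
    ring

/-- For the third pair over a non-abelian epimorphic image of `Γ₃`, with `char K ≠ 3`,
`ρ_g ρ_z σ_g = 1` and `1 − ρ_g + ρ_g² = 0`, the vector
`w‴ = v₂⊗w″ + ρ_g² ρ_z v₁⊗(g·w″)` is non-zero and `g·w‴ = σ_g w‴`,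
`z·w‴ = ρ_z³ σ_z w‴`. -/
theorem third_pair_adV_cube_W
    {K : Type*} [Field K] {G : Type*} [Group G]
    (g ε z : G) (hε : ε ≠ 1)
    (hgen : Subgroup.closure {g, ε, z} = ⊤)
    (hrel1 : g * ε * g⁻¹ = ε ^ 2) (hrel2 : ε ^ 3 = 1)
    (hrel3 : z * g = g * z) (hrel4 : z * ε = ε * z)
    {V : Type*} [AddCommGroup V] [Module K V]
    (ρ : Representation K G V) (v : Module.Basis (Fin 3) K V)
    (ρg ρz : K) (hρg : ρg ≠ 0) (hρz : ρz ≠ 0)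
    (hεv0 : ρ ε (v 0) = v 1) (hεv1 : ρ ε (v 1) = v 2) (hεv2 : ρ ε (v 2) = v 0)
    (hzv : ∀ i, ρ z (v i) = ρz • v i)
    (hgv0 : ρ g (v 0) = ρg • v 0) (hgv1 : ρ g (v 1) = ρg • v 2)
    (hgv2 : ρ g (v 2) = ρg • v 1)
    {W : Type*} [AddCommGroup W] [Module K W]
    (σ : Representation K G W) (w : W) (hw : w ≠ 0)
    (hspan : Submodule.span K ({w} : Set W) = ⊤)
    (σg σz : K) (hσg : σg ≠ 0) (hσz : σz ≠ 0)
    (hgw : σ g w = σg • w) (hεw : σ ε w = w) (hzw : σ z w = σz • w)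
    (hchar : ringChar K ≠ 3)
    (hcond1 : ρg * ρz * σg = 1) (hcond2 : 1 - ρg + ρg ^ 2 = 0) :
    ∀ (w'' : V ⊗[K] (V ⊗[K] W)) (w''' : V ⊗[K] (V ⊗[K] (V ⊗[K] W))),
      w'' = v 2 ⊗ₜ[K] (v 0 ⊗ₜ[K] w) -
          (ρg ^ 2 * ρz * σg) • (v 0 ⊗ₜ[K] (v 1 ⊗ₜ[K] w)) +
          (ρg * (1 - ρz * σg)) • (v 1 ⊗ₜ[K] (v 2 ⊗ₜ[K] w)) →
      w''' = v 2 ⊗ₜ[K] w'' +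
          (ρg ^ 2 * ρz) • (v 1 ⊗ₜ[K] ((ρ.tprod (ρ.tprod σ)) g w'')) →
      w''' ≠ 0 ∧
      (ρ.tprod (ρ.tprod (ρ.tprod σ))) g w''' = σg • w''' ∧
      (ρ.tprod (ρ.tprod (ρ.tprod σ))) z w''' = (ρz ^ 3 * σz) • w''' :=
  third_pair_adV_cube_W_general g z ρ v ρg ρz hzv hgv0 hgv1 hgv2 σ w hw hspan σg σz hgw hzw hcond1
    hcond2
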